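/- Let 𝒦 ⊆ ℝ^d be a convex body, x ∈ int(𝒦), and let ψ_𝒦(x) = log vol((𝒦 − x)°) be the universal barrier. Let μ and Σ be the centroid and covariance matrix of the polar body (𝒦 − x)°. Then ∇ψ_𝒦(x) = (d+1)μ and ∇²ψ_𝒦(x) = (d+1)(d+2)Σ + (d+1)μμᵀ. -/

import Mathlib

open Set MeasureTheory

/-- The polar set of `K` with respect to `x`: `(K − x)° = {y : ⟨y, z − x⟩ ≤ 1 ∀ z ∈ K}`. -/
def polarAt {d : ℕ} (K : Set (EuclideanSpace ℝ (Fin d))) (x : EuclideanSpace ℝ (Fin d)) :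
    Set (EuclideanSpace ℝ (Fin d)) :=
  {y | ∀ z ∈ K, (inner ℝ y (z - x) : ℝ) ≤ 1}

/-- The universal barrier `ψ_K(x) = log vol((K − x)°)`. -/
noncomputable def uniBarrier {d : ℕ} (K : Set (EuclideanSpace ℝ (Fin d)))
    (x : EuclideanSpace ℝ (Fin d)) : ℝ :=
  Real.log ((volume (polarAt K x)).toReal)

open Real ENNReal Filter Topology
open scoped Pointwise


lemma aux_exp_lint (a : ℝ) :
    ∫⁻ t in Ioi a, ENNReal.ofReal (Real.exp (-t)) = ENNReal.ofReal (Real.exp (-a)) := by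
  rw [← ofReal_integral_eq_lintegral_ofReal]
  · rw [integral_exp_neg_Ioi]
  · have := exp_neg_integrableOn_Ioi a (b := 1) one_pos
    exact (by simpa using this : IntegrableOn (fun t => rexp (-t)) (Ioi a))
  · filter_upwards with t using (Real.exp_pos _).le

lemma aux_gamma (n : ℕ) :
    ∫⁻ t in Ioi (0:ℝ), ENNReal.ofReal (Real.exp (-t) * t ^ n) = ENNReal.ofReal n.factorial := by
  have h1 : IntegrableOn (fun t : ℝ => Real.exp (-t) * t ^ n) (Ioi 0) := by
    have := Real.GammaIntegral_convergent (s := n + 1) (by positivity)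
    apply this.congr_fun ?_ measurableSet_Ioi
    intro t ht
    simp [show ((n:ℝ) + 1 - 1) = (n:ℝ) by ring, Real.rpow_natCast]
  rw [← ofReal_integral_eq_lintegral_ofReal h1]
  · congr 1
    have h2 := Real.Gamma_eq_integral (s := n + 1) (by positivity)
    rw [Real.Gamma_nat_eq_factorial] at h2
    rw [h2]
    apply setIntegral_congr_fun measurableSet_Ioi
    intro t ht
    simp [show ((n:ℝ) + 1 - 1) = (n:ℝ) by ring, Real.rpow_natCast]
  · filter_upwards [ae_restrict_mem measurableSet_Ioi] with t ht
    have : (0:ℝ) < t := ht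
    positivity

lemma setLIntegral_smul_set {d : ℕ} (t : ℝ) (ht : 0 < t) (s : Set (EuclideanSpace ℝ (Fin d)))
    (hs : MeasurableSet s) (F : EuclideanSpace ℝ (Fin d) → ℝ≥0∞) (hF : Measurable F) :
    ∫⁻ y in t • s, F y = ENNReal.ofReal (t ^ d) * ∫⁻ y in s, F (t • y) := by
  have hd : Module.finrank ℝ (EuclideanSpace ℝ (Fin d)) = d := finrank_euclideanSpace_fin
  have hmap := Measure.map_addHaar_smul (volume : Measure (EuclideanSpace ℝ (Fin d)))
    (ne_of_gt ht)
  have hmeas_smul : Measurable fun y : EuclideanSpace ℝ (Fin d) => t • y :=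
    (continuous_const_smul t).measurable
  have hts : MeasurableSet (t • s) := hs.const_smul₀ t
  have key : ∫⁻ y, (t • s).indicator F y ∂(Measure.map (fun y => t • y) volume)
      = ∫⁻ y in s, F (t • y) := by
    rw [lintegral_map (hF.indicator hts) hmeas_smul]
    rw [← lintegral_indicator hs]
    congr 1
    ext y
    by_cases hy : y ∈ s
    · rw [Set.indicator_of_mem hy, Set.indicator_of_mem (smul_mem_smul_set hy)]
    · rw [Set.indicator_of_notMem hy, Set.indicator_of_notMem]
      intro hc
      exact hy ((smul_mem_smul_set_iff₀ (ne_of_gt ht) s y).mp hc)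
  rw [hmap] at key
  rw [lintegral_smul_measure] at key
  rw [lintegral_indicator hts] at key
  rw [← key, hd]
  rw [smul_eq_mul, ← mul_assoc, ← ENNReal.ofReal_mul (by positivity)]
  rw [abs_of_nonneg (by positivity), mul_inv_cancel₀ (by positivity), ENNReal.ofReal_one, one_mul]

lemma moment_lintegral {d : ℕ} (g f : EuclideanSpace ℝ (Fin d) → ℝ) (k : ℕ) (c : ℝ) (hc : 0 < c)
    (hg_cont : Continuous g)
    (hg_hom : ∀ (t : ℝ) (y : EuclideanSpace ℝ (Fin d)), 0 < t → g (t • y) = t * g y)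
    (hg_low : ∀ y, c * ‖y‖ ≤ g y) (hg_conv : Convex ℝ {y | g y ≤ 1})
    (hf_cont : Continuous f) (hf_nn : ∀ y, 0 ≤ f y)
    (hf_hom : ∀ (t : ℝ) (y : EuclideanSpace ℝ (Fin d)), 0 < t → f (t • y) = t ^ k * f y) :
    ∫⁻ y, ENNReal.ofReal (f y * Real.exp (-g y)) =
      ENNReal.ofReal ((d + k).factorial) * ∫⁻ y in {y | g y ≤ 1}, ENNReal.ofReal (f y) := by
  have hg0 : ∀ y, 0 ≤ g y := fun y => le_trans (by positivity) (hg_low y)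
  have hopen : IsOpen {y : EuclideanSpace ℝ (Fin d) | g y < 1} :=
    isOpen_lt hg_cont continuous_const
  have hmlt : MeasurableSet {y : EuclideanSpace ℝ (Fin d) | g y < 1} := hopen.measurableSet
  have hmle : MeasurableSet {y : EuclideanSpace ℝ (Fin d) | g y ≤ 1} :=
    (isClosed_le hg_cont continuous_const).measurableSet
  -- the sublevel sets scale
  have hscale : ∀ t : ℝ, 0 < t →
      {y : EuclideanSpace ℝ (Fin d) | g y < t} = t • {y | g y < 1} := by
    intro t ht
    ext y
    rw [Set.mem_smul_set_iff_inv_smul_mem₀ (ne_of_gt ht)]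
    simp only [Set.mem_setOf_eq]
    rw [hg_hom t⁻¹ y (by positivity)]
    rw [inv_mul_lt_iff₀ ht, mul_one]
  -- ae-equality of open and closed sublevel sets
  have hae : {y : EuclideanSpace ℝ (Fin d) | g y < 1} =ᵐ[volume]
      {y : EuclideanSpace ℝ (Fin d) | g y ≤ 1} := by
    rw [MeasureTheory.ae_eq_set]
    constructor
    · have : {y : EuclideanSpace ℝ (Fin d) | g y < 1} \ {y | g y ≤ 1} = ∅ := by
        ext y; simp only [Set.mem_diff, Set.mem_setOf_eq, Set.mem_empty_iff_false]
        exact ⟨fun ⟨h1, h2⟩ => h2 h1.le, False.elim⟩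
      simp [this]
    · have hsub : {y : EuclideanSpace ℝ (Fin d) | g y ≤ 1} \ {y | g y < 1} ⊆
          frontier {y | g y ≤ 1} := by
        rintro y ⟨h1, h2⟩
        have hy1 : g y = 1 := le_antisymm h1 (not_lt.mp h2)
        constructor
        · exact subset_closure h1
        · intro hy
          obtain ⟨δ, hδ, hball⟩ := Metric.isOpen_iff.mp isOpen_interior y hy
          have hyne : y ≠ 0 := by
            intro h0
            rw [h0] at hy1
            have : g (0 : EuclideanSpace ℝ (Fin d)) = 2 * g 0 := by
              have := hg_hom 2 0 two_pos; simpa using this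
            nlinarith [this]
          set t : ℝ := 1 + δ / (2 * ‖y‖) with ht_def
          have hyn : 0 < ‖y‖ := norm_pos_iff.mpr hyne
          have hq : 0 < δ / (2 * ‖y‖) := by positivity
          have htpos : (1:ℝ) < t := by rw [ht_def]; linarith
          have hmem : t • y ∈ Metric.ball y δ := by
            rw [Metric.mem_ball, dist_eq_norm]
            have : t • y - y = (t - 1) • y := by rw [sub_smul, one_smul]
            rw [this, norm_smul]
            simp only [Real.norm_eq_abs]
            rw [abs_of_pos (by linarith)]
            rw [ht_def]
            have : (1 + δ / (2 * ‖y‖) - 1) * ‖y‖ = δ / 2 := by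
              field_simp; ring
            rw [this]; linarith
          have h3 : t • y ∈ {y : EuclideanSpace ℝ (Fin d) | g y ≤ 1} :=
            interior_subset (hball hmem)
          have h4 : g (t • y) ≤ 1 := h3
          rw [hg_hom t y (by linarith), hy1, mul_one] at h4
          linarith
      exact measure_mono_null hsub (hg_conv.addHaar_frontier volume)
  -- measurability of basic functions
  have hfm : Measurable fun y => ENNReal.ofReal (f y) := hf_cont.measurable.ennreal_ofReal
  set I : ℝ≥0∞ := ∫⁻ y in {y : EuclideanSpace ℝ (Fin d) | g y ≤ 1}, ENNReal.ofReal (f y) with hI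
  have hIlt : (∫⁻ y in {y : EuclideanSpace ℝ (Fin d) | g y < 1}, ENNReal.ofReal (f y)) = I := by
    rw [hI]; exact setLIntegral_congr hae
  -- scaling identity for the inner integral
  have hinner : ∀ t : ℝ, 0 < t →
      (∫⁻ y in {y : EuclideanSpace ℝ (Fin d) | g y < t}, ENNReal.ofReal (f y))
        = ENNReal.ofReal (t ^ (d + k)) * I := by
    intro t ht
    rw [hscale t ht, setLIntegral_smul_set t ht _ hmlt _ hfm]
    have : ∀ y, ENNReal.ofReal (f (t • y)) = ENNReal.ofReal (t ^ k) * ENNReal.ofReal (f y) := by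
      intro y
      rw [hf_hom t y ht, ENNReal.ofReal_mul (by positivity)]
    simp_rw [this]
    rw [lintegral_const_mul _ hfm, hIlt, ← mul_assoc, ← ENNReal.ofReal_mul (by positivity),
      ← pow_add]
  -- Fubini-Tonelli
  have swap := lintegral_lintegral_swap (μ := (volume : Measure (EuclideanSpace ℝ (Fin d))))
    (ν := volume.restrict (Ioi (0:ℝ)))
    (f := fun y t => Set.indicator {p : EuclideanSpace ℝ (Fin d) × ℝ | g p.1 < p.2}
      (fun p => ENNReal.ofReal (f p.1) * ENNReal.ofReal (Real.exp (-p.2))) (y, t))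
    (by
      apply Measurable.aemeasurable
      have hS : MeasurableSet {p : EuclideanSpace ℝ (Fin d) × ℝ | g p.1 < p.2} :=
        (isOpen_lt (hg_cont.comp continuous_fst) continuous_snd).measurableSet
      exact (((hf_cont.comp continuous_fst).measurable.ennreal_ofReal).mul
        ((Real.continuous_exp.comp continuous_snd.neg).measurable.ennreal_ofReal)).indicator hS)
  calc ∫⁻ y, ENNReal.ofReal (f y * Real.exp (-g y))
      = ∫⁻ y, ∫⁻ t in Ioi (0:ℝ), Set.indicator {p : EuclideanSpace ℝ (Fin d) × ℝ | g p.1 < p.2}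
          (fun p => ENNReal.ofReal (f p.1) * ENNReal.ofReal (Real.exp (-p.2))) (y, t) := by
        congr 1; funext y
        have hind : ∀ t : ℝ, Set.indicator {p : EuclideanSpace ℝ (Fin d) × ℝ | g p.1 < p.2}
            (fun p => ENNReal.ofReal (f p.1) * ENNReal.ofReal (Real.exp (-p.2))) (y, t)
            = Set.indicator (Ioi (g y))
              (fun t => ENNReal.ofReal (f y) * ENNReal.ofReal (Real.exp (-t))) t := by
          intro t
          by_cases h : g y < t
          · rw [Set.indicator_of_mem (show (y,t) ∈ {p : EuclideanSpace ℝ (Fin d) × ℝ | g p.1 < p.2} from h),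
              Set.indicator_of_mem (show t ∈ Ioi (g y) from h)]
          · rw [Set.indicator_of_notMem (show (y,t) ∉ {p : EuclideanSpace ℝ (Fin d) × ℝ | g p.1 < p.2} from h),
              Set.indicator_of_notMem (show t ∉ Ioi (g y) from h)]
        simp_rw [hind]
        rw [lintegral_indicator measurableSet_Ioi, Measure.restrict_restrict measurableSet_Ioi,
          Set.inter_eq_self_of_subset_left (Ioi_subset_Ioi (hg0 y))]
        rw [lintegral_const_mul _ (by fun_prop : Measurable fun t : ℝ => ENNReal.ofReal (Real.exp (-t))),
          aux_exp_lint]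
        rw [← ENNReal.ofReal_mul (hf_nn y)]
    _ = ∫⁻ t in Ioi (0:ℝ), ∫⁻ y, Set.indicator {p : EuclideanSpace ℝ (Fin d) × ℝ | g p.1 < p.2}
          (fun p => ENNReal.ofReal (f p.1) * ENNReal.ofReal (Real.exp (-p.2))) (y, t) := swap
    _ = ∫⁻ t in Ioi (0:ℝ), ENNReal.ofReal (Real.exp (-t) * t ^ (d + k)) * I := by
        apply setLIntegral_congr_fun measurableSet_Ioi
        intro t ht
        have hind : ∀ y, Set.indicator {p : EuclideanSpace ℝ (Fin d) × ℝ | g p.1 < p.2}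
            (fun p => ENNReal.ofReal (f p.1) * ENNReal.ofReal (Real.exp (-p.2))) (y, t)
            = Set.indicator {y : EuclideanSpace ℝ (Fin d) | g y < t}
              (fun y => ENNReal.ofReal (f y) * ENNReal.ofReal (Real.exp (-t))) y := by
          intro y
          by_cases h : g y < t
          · rw [Set.indicator_of_mem (show (y,t) ∈ {p : EuclideanSpace ℝ (Fin d) × ℝ | g p.1 < p.2} from h),
              Set.indicator_of_mem (show y ∈ {y : EuclideanSpace ℝ (Fin d) | g y < t} from h)]
          · rw [Set.indicator_of_notMem (show (y,t) ∉ {p : EuclideanSpace ℝ (Fin d) × ℝ | g p.1 < p.2} from h),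
              Set.indicator_of_notMem (show y ∉ {y : EuclideanSpace ℝ (Fin d) | g y < t} from h)]
        simp_rw [hind]
        rw [lintegral_indicator (isOpen_lt hg_cont continuous_const).measurableSet]
        rw [lintegral_mul_const _ hfm, hinner t ht]
        rw [ENNReal.ofReal_mul (Real.exp_pos _).le]
        ring
    _ = ENNReal.ofReal ((d + k).factorial) * I := by
        rw [lintegral_mul_const _
          (by fun_prop : Measurable fun t : ℝ => ENNReal.ofReal (Real.exp (-t) * t ^ (d + k))),
          aux_gamma]

lemma sublevel_compact {d : ℕ} {g : EuclideanSpace ℝ (Fin d) → ℝ} {c : ℝ} (hc : 0 < c)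
    (hg_cont : Continuous g) (hg_low : ∀ y, c * ‖y‖ ≤ g y) :
    IsCompact {y : EuclideanSpace ℝ (Fin d) | g y ≤ 1} := by
  have hsub : {y : EuclideanSpace ℝ (Fin d) | g y ≤ 1} ⊆ Metric.closedBall 0 c⁻¹ := by
    intro y hy
    rw [Metric.mem_closedBall, dist_zero_right]
    have h1 : c * ‖y‖ ≤ 1 := le_trans (hg_low y) hy
    rw [← le_div_iff₀' hc] at h1
    simpa [div_eq_inv_mul, one_div] using h1
  exact (isCompact_closedBall 0 c⁻¹).of_isClosed_subset
    (isClosed_le hg_cont continuous_const) hsub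

lemma moment_integral_nonneg {d : ℕ} (g f : EuclideanSpace ℝ (Fin d) → ℝ) (k : ℕ) (c : ℝ)
    (hc : 0 < c) (hg_cont : Continuous g)
    (hg_hom : ∀ (t : ℝ) (y : EuclideanSpace ℝ (Fin d)), 0 < t → g (t • y) = t * g y)
    (hg_low : ∀ y, c * ‖y‖ ≤ g y) (hg_conv : Convex ℝ {y | g y ≤ 1})
    (hf_cont : Continuous f) (hf_nn : ∀ y, 0 ≤ f y)
    (hf_hom : ∀ (t : ℝ) (y : EuclideanSpace ℝ (Fin d)), 0 < t → f (t • y) = t ^ k * f y) :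
    Integrable (fun y => f y * Real.exp (-g y)) ∧
    ∫ y, f y * Real.exp (-g y) =
      ((d + k).factorial : ℝ) * ∫ y in {y : EuclideanSpace ℝ (Fin d) | g y ≤ 1}, f y := by
  have hcomp := sublevel_compact hc hg_cont hg_low
  have key := moment_lintegral g f k c hc hg_cont hg_hom hg_low hg_conv hf_cont hf_nn hf_hom
  have hIntOn : IntegrableOn f {y : EuclideanSpace ℝ (Fin d) | g y ≤ 1} :=
    hf_cont.continuousOn.integrableOn_compact hcomp
  have hIfin : (∫⁻ y in {y : EuclideanSpace ℝ (Fin d) | g y ≤ 1}, ENNReal.ofReal (f y)) < ⊤ := by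
    rw [← ofReal_integral_eq_lintegral_ofReal hIntOn
      (Filter.Eventually.of_forall fun y => hf_nn y)]
    exact ENNReal.ofReal_lt_top
  have hmble : AEStronglyMeasurable (fun y : EuclideanSpace ℝ (Fin d) => f y * Real.exp (-g y))
      volume := (hf_cont.mul (Real.continuous_exp.comp hg_cont.neg)).aestronglyMeasurable
  have hnn : ∀ y : EuclideanSpace ℝ (Fin d), 0 ≤ f y * Real.exp (-g y) := fun y =>
    mul_nonneg (hf_nn y) (Real.exp_pos _).le
  have hInt : Integrable (fun y : EuclideanSpace ℝ (Fin d) => f y * Real.exp (-g y)) := by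
    refine ⟨hmble, ?_⟩
    rw [hasFiniteIntegral_iff_ofReal (Filter.Eventually.of_forall hnn)]
    rw [key]
    exact ENNReal.mul_lt_top ENNReal.ofReal_lt_top hIfin
  refine ⟨hInt, ?_⟩
  rw [← ofReal_integral_eq_lintegral_ofReal hInt (Filter.Eventually.of_forall hnn),
    ← ofReal_integral_eq_lintegral_ofReal hIntOn (Filter.Eventually.of_forall fun y => hf_nn y),
    ← ENNReal.ofReal_mul (Nat.cast_nonneg _)] at key
  exact (ENNReal.ofReal_eq_ofReal_iff (integral_nonneg hnn)
    (mul_nonneg (Nat.cast_nonneg _) (integral_nonneg (fun y => hf_nn y)))).mp key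

lemma moment_integral {d : ℕ} (g f : EuclideanSpace ℝ (Fin d) → ℝ) (k : ℕ) (c : ℝ)
    (hc : 0 < c) (hg_cont : Continuous g)
    (hg_hom : ∀ (t : ℝ) (y : EuclideanSpace ℝ (Fin d)), 0 < t → g (t • y) = t * g y)
    (hg_low : ∀ y, c * ‖y‖ ≤ g y) (hg_conv : Convex ℝ {y | g y ≤ 1})
    (hf_cont : Continuous f)
    (hf_hom : ∀ (t : ℝ) (y : EuclideanSpace ℝ (Fin d)), 0 < t → f (t • y) = t ^ k * f y) :
    Integrable (fun y => f y * Real.exp (-g y)) ∧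
    ∫ y, f y * Real.exp (-g y) =
      ((d + k).factorial : ℝ) * ∫ y in {y : EuclideanSpace ℝ (Fin d) | g y ≤ 1}, f y := by
  have hcomp := sublevel_compact hc hg_cont hg_low
  set fp : EuclideanSpace ℝ (Fin d) → ℝ := fun y => max (f y) 0 with hfp
  set fm : EuclideanSpace ℝ (Fin d) → ℝ := fun y => max (-f y) 0 with hfm
  have hp := moment_integral_nonneg g fp k c hc hg_cont hg_hom hg_low hg_conv
    (hf_cont.max continuous_const) (fun y => le_max_right _ _)
    (fun t y ht => by
      simp only [hfp]
      rw [hf_hom t y ht, mul_max_of_nonneg _ _ (by positivity : (0:ℝ) ≤ t ^ k), mul_zero])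
  have hm := moment_integral_nonneg g fm k c hc hg_cont hg_hom hg_low hg_conv
    (hf_cont.neg.max continuous_const) (fun y => le_max_right _ _)
    (fun t y ht => by
      simp only [hfm]
      rw [hf_hom t y ht, mul_max_of_nonneg _ _ (by positivity : (0:ℝ) ≤ t ^ k), mul_zero,
        mul_neg])
  have hdiff : ∀ y : EuclideanSpace ℝ (Fin d),
      f y * Real.exp (-g y) = fp y * Real.exp (-g y) - fm y * Real.exp (-g y) := by
    intro y
    rw [← sub_mul]
    congr 1
    simp [hfp, hfm, max_zero_sub_max_neg_zero_eq_self]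
  have hInt : Integrable (fun y : EuclideanSpace ℝ (Fin d) => f y * Real.exp (-g y)) := by
    apply (hp.1.sub hm.1).congr
    filter_upwards with y using (hdiff y).symm
  refine ⟨hInt, ?_⟩
  have hIntOnp : IntegrableOn fp {y : EuclideanSpace ℝ (Fin d) | g y ≤ 1} :=
    (hf_cont.max continuous_const).continuousOn.integrableOn_compact hcomp
  have hIntOnm : IntegrableOn fm {y : EuclideanSpace ℝ (Fin d) | g y ≤ 1} :=
    (hf_cont.neg.max continuous_const).continuousOn.integrableOn_compact hcomp
  calc ∫ y, f y * Real.exp (-g y)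
      = ∫ y, (fp y * Real.exp (-g y) - fm y * Real.exp (-g y)) := by
        congr 1; funext y; exact hdiff y
    _ = (∫ y, fp y * Real.exp (-g y)) - ∫ y, fm y * Real.exp (-g y) :=
        integral_sub hp.1 hm.1
    _ = ((d + k).factorial : ℝ) * ((∫ y in {y : EuclideanSpace ℝ (Fin d) | g y ≤ 1}, fp y)
          - ∫ y in {y : EuclideanSpace ℝ (Fin d) | g y ≤ 1}, fm y) := by
        rw [hp.2, hm.2]; ring
    _ = ((d + k).factorial : ℝ) * ∫ y in {y : EuclideanSpace ℝ (Fin d) | g y ≤ 1}, f y := by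
        rw [← integral_sub hIntOnp hIntOnm]
        congr 1
        apply integral_congr_ae
        filter_upwards with y
        simp [hfp, hfm, max_zero_sub_max_neg_zero_eq_self]

open scoped RealInnerProductSpace

noncomputable def suppFn {d : ℕ} (K : Set (EuclideanSpace ℝ (Fin d)))
    (y : EuclideanSpace ℝ (Fin d)) : ℝ :=
  sSup ((fun z => (inner ℝ y z : ℝ)) '' K)

section SuppFn

variable {d : ℕ} {K : Set (EuclideanSpace ℝ (Fin d))} (hKc : IsCompact K) (hne : K.Nonempty)

set_option linter.unusedSectionVars false
include hKc hne

lemma suppFn_exists_max (y : EuclideanSpace ℝ (Fin d)) :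
    ∃ z ∈ K, suppFn K y = ⟪y, z⟫ ∧ ∀ w ∈ K, ⟪y, w⟫ ≤ ⟪y, z⟫ := by
  obtain ⟨z, hz, hmax⟩ := hKc.exists_isMaxOn hne
    ((continuous_const.inner continuous_id).continuousOn :
      ContinuousOn (fun z => (⟪y, z⟫ : ℝ)) K)
  refine ⟨z, hz, ?_, fun w hw => hmax hw⟩
  apply le_antisymm
  · exact csSup_le (hne.image _) (by rintro _ ⟨w, hw, rfl⟩; exact hmax hw)
  · exact le_csSup ⟨⟪y, z⟫, by rintro _ ⟨w, hw, rfl⟩; exact hmax hw⟩ ⟨z, hz, rfl⟩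

lemma le_suppFn {z : EuclideanSpace ℝ (Fin d)} (hz : z ∈ K) (y : EuclideanSpace ℝ (Fin d)) :
    ⟪y, z⟫ ≤ suppFn K y := by
  obtain ⟨z₀, hz₀, heq, hmax⟩ := suppFn_exists_max hKc hne y
  rw [heq]; exact hmax z hz

lemma suppFn_le {a : ℝ} {y : EuclideanSpace ℝ (Fin d)} (h : ∀ z ∈ K, ⟪y, z⟫ ≤ a) :
    suppFn K y ≤ a :=
  csSup_le (hne.image _) (by rintro _ ⟨w, hw, rfl⟩; exact h w hw)

lemma mem_polarAt {x y : EuclideanSpace ℝ (Fin d)} :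
    y ∈ polarAt K x ↔ suppFn K y - ⟪y, x⟫ ≤ 1 := by
  constructor
  · intro hy
    rw [sub_le_iff_le_add]
    apply suppFn_le hKc hne
    intro z hz
    have := hy z hz
    rw [inner_sub_right] at this
    linarith
  · intro hy z hz
    rw [inner_sub_right]
    have := le_suppFn hKc hne hz y
    linarith

lemma suppFn_smul {t : ℝ} (ht : 0 < t) (y : EuclideanSpace ℝ (Fin d)) :
    suppFn K (t • y) = t * suppFn K y := by
  obtain ⟨z₀, hz₀, heq, hmax⟩ := suppFn_exists_max hKc hne y
  apply le_antisymm
  · apply suppFn_le hKc hne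
    intro z hz
    rw [real_inner_smul_left]
    rw [heq]
    exact mul_le_mul_of_nonneg_left (hmax z hz) ht.le
  · have := le_suppFn hKc hne hz₀ (t • y)
    rw [real_inner_smul_left] at this
    rw [heq]
    linarith

lemma suppFn_lipschitz {R : ℝ} (hR : ∀ z ∈ K, ‖z‖ ≤ R) (y₁ y₂ : EuclideanSpace ℝ (Fin d)) :
    suppFn K y₁ - suppFn K y₂ ≤ R * ‖y₁ - y₂‖ := by
  obtain ⟨z₁, hz₁, heq₁, _⟩ := suppFn_exists_max hKc hne y₁
  have h2 := le_suppFn hKc hne hz₁ y₂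
  have : ⟪y₁, z₁⟫ - ⟪y₂, z₁⟫ = ⟪y₁ - y₂, z₁⟫ := by rw [inner_sub_left]
  have hb : ⟪y₁ - y₂, z₁⟫ ≤ R * ‖y₁ - y₂‖ := by
    calc ⟪y₁ - y₂, z₁⟫ ≤ ‖y₁ - y₂‖ * ‖z₁‖ := real_inner_le_norm _ _
      _ ≤ ‖y₁ - y₂‖ * R := by
          apply mul_le_mul_of_nonneg_left (hR z₁ hz₁) (norm_nonneg _)
      _ = R * ‖y₁ - y₂‖ := mul_comm _ _
  rw [heq₁]
  linarith

lemma suppFn_continuous {R : ℝ} (hR : ∀ z ∈ K, ‖z‖ ≤ R) :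
    Continuous (suppFn K) := by
  have hR0 : 0 ≤ R := by
    obtain ⟨z, hz⟩ := hne
    exact le_trans (norm_nonneg z) (hR z hz)
  apply LipschitzWith.continuous (K := Real.toNNReal R)
  apply LipschitzWith.of_dist_le_mul
  intro y₁ y₂
  rw [Real.dist_eq, dist_eq_norm, Real.coe_toNNReal R hR0]
  rw [abs_le]
  constructor
  · have := suppFn_lipschitz hKc hne hR y₂ y₁
    rw [norm_sub_rev] at this
    linarith
  · exact suppFn_lipschitz hKc hne hR y₁ y₂

lemma convex_polarAt (x : EuclideanSpace ℝ (Fin d)) : Convex ℝ (polarAt K x) := by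
  intro y₁ h₁ y₂ h₂ a b ha hb hab
  intro z hz
  have e : (inner ℝ (a • y₁ + b • y₂) (z - x) : ℝ) =
      a * ⟪y₁, z - x⟫ + b * ⟪y₂, z - x⟫ := by
    rw [inner_add_left, real_inner_smul_left, real_inner_smul_left]
  rw [e]
  have := h₁ z hz
  have := h₂ z hz
  nlinarith

lemma suppFn_lower {x : EuclideanSpace ℝ (Fin d)} {ε : ℝ} (hε : 0 < ε)
    (hball : Metric.closedBall x ε ⊆ K) (y : EuclideanSpace ℝ (Fin d)) :
    ⟪y, x⟫ + ε * ‖y‖ ≤ suppFn K y := by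
  by_cases hy : y = 0
  · subst hy
    simp only [inner_zero_left, norm_zero, mul_zero, add_zero]
    exact le_trans (by simp) (le_suppFn hKc hne (hball (Metric.mem_closedBall_self hε.le)) 0)
  · have hyn : 0 < ‖y‖ := norm_pos_iff.mpr hy
    have hz : x + (ε / ‖y‖) • y ∈ K := by
      apply hball
      rw [Metric.mem_closedBall, dist_eq_norm]
      have : x + (ε / ‖y‖) • y - x = (ε / ‖y‖) • y := by abel
      rw [this, norm_smul, Real.norm_eq_abs, abs_of_pos (by positivity)]
      rw [div_mul_cancel₀ _ (ne_of_gt hyn)]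
    have := le_suppFn hKc hne hz y
    rw [inner_add_right, real_inner_smul_right, real_inner_self_eq_norm_sq] at this
    have he : ε / ‖y‖ * ‖y‖ ^ 2 = ε * ‖y‖ := by
      field_simp
    rw [he] at this
    exact this

lemma suppFn_upper {R : ℝ} (hR : ∀ z ∈ K, ‖z‖ ≤ R) (y : EuclideanSpace ℝ (Fin d)) :
    suppFn K y ≤ R * ‖y‖ := by
  apply suppFn_le hKc hne
  intro z hz
  calc ⟪y, z⟫ ≤ ‖y‖ * ‖z‖ := real_inner_le_norm _ _
    _ ≤ ‖y‖ * R := mul_le_mul_of_nonneg_left (hR z hz) (norm_nonneg _)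
    _ = R * ‖y‖ := mul_comm _ _

end SuppFn

section PolarMoment

variable {d : ℕ} {K : Set (EuclideanSpace ℝ (Fin d))} (hKc : IsCompact K) (hne : K.Nonempty)
  {R : ℝ} (hR : ∀ z ∈ K, ‖z‖ ≤ R)

set_option linter.unusedSectionVars false

include hKc hne hR

lemma polar_moment {w : EuclideanSpace ℝ (Fin d)} {ρ : ℝ} (hρ : 0 < ρ)
    (hball : Metric.closedBall w ρ ⊆ K) (f : EuclideanSpace ℝ (Fin d) → ℝ) (k : ℕ)
    (hf_cont : Continuous f)
    (hf_hom : ∀ (t : ℝ) (y : EuclideanSpace ℝ (Fin d)), 0 < t → f (t • y) = t ^ k * f y) :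
    Integrable (fun y => f y * Real.exp (⟪y, w⟫ - suppFn K y)) ∧
    ∫ y, f y * Real.exp (⟪y, w⟫ - suppFn K y) =
      ((d + k).factorial : ℝ) * ∫ y in polarAt K w, f y := by
  set g : EuclideanSpace ℝ (Fin d) → ℝ := fun y => suppFn K y - ⟪y, w⟫ with hg
  have hset : {y : EuclideanSpace ℝ (Fin d) | g y ≤ 1} = polarAt K w := by
    ext y
    rw [Set.mem_setOf_eq, hg, mem_polarAt hKc hne]
  have hmain := moment_integral g f k ρ hρ
    ((suppFn_continuous hKc hne hR).sub (continuous_id.inner continuous_const))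
    (fun t y ht => by
      simp only [hg]
      rw [suppFn_smul hKc hne ht, real_inner_smul_left]; ring)
    (fun y => by
      have := suppFn_lower hKc hne hρ hball y
      simp only [hg]; linarith)
    (by rw [hset]; exact convex_polarAt hKc hne w)
    hf_cont hf_hom
  have hexp : ∀ y : EuclideanSpace ℝ (Fin d), Real.exp (-g y) = Real.exp (⟪y, w⟫ - suppFn K y) := by
    intro y; rw [hg]; congr 1; ring
  constructor
  · apply hmain.1.congr
    filter_upwards with y
    rw [hexp y]
  · rw [← hset]
    have : (fun y : EuclideanSpace ℝ (Fin d) => f y * Real.exp (⟪y, w⟫ - suppFn K y))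
        = fun y => f y * Real.exp (-g y) := by
      funext y; rw [hexp y]
    rw [this, hmain.2]

lemma polar_compact {w : EuclideanSpace ℝ (Fin d)} {ρ : ℝ} (hρ : 0 < ρ)
    (hball : Metric.closedBall w ρ ⊆ K) : IsCompact (polarAt K w) := by
  have hset : {y : EuclideanSpace ℝ (Fin d) | suppFn K y - ⟪y, w⟫ ≤ 1} = polarAt K w := by
    ext y; rw [Set.mem_setOf_eq, mem_polarAt hKc hne]
  rw [← hset]
  have hgc : Continuous fun y : EuclideanSpace ℝ (Fin d) => suppFn K y - ⟪y, w⟫ :=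
    (suppFn_continuous hKc hne hR).sub (continuous_id.inner continuous_const)
  apply sublevel_compact hρ hgc
  intro y
  have := suppFn_lower hKc hne hρ hball y
  linarith

lemma polar_vol_pos {w : EuclideanSpace ℝ (Fin d)} {ρ : ℝ} (hρ : 0 < ρ)
    (hball : Metric.closedBall w ρ ⊆ K) : 0 < (volume (polarAt K w)).toReal := by
  have hwK : w ∈ K := hball (Metric.mem_closedBall_self hρ.le)
  have hRw : 0 ≤ R := le_trans (norm_nonneg w) (hR w hwK)
  apply ENNReal.toReal_pos
  · -- contains a small ball
    have hδ : (0:ℝ) < (R + ‖w‖ + 1)⁻¹ := by positivity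
    have hsub : Metric.ball 0 ((R + ‖w‖ + 1)⁻¹) ⊆ polarAt K w := by
      intro y hy
      rw [Metric.mem_ball, dist_zero_right] at hy
      intro z hz
      calc (inner ℝ y (z - w) : ℝ) ≤ ‖y‖ * ‖z - w‖ := real_inner_le_norm _ _
        _ ≤ ‖y‖ * (R + ‖w‖) := by
            apply mul_le_mul_of_nonneg_left _ (norm_nonneg _)
            calc ‖z - w‖ ≤ ‖z‖ + ‖w‖ := norm_sub_le _ _
              _ ≤ R + ‖w‖ := by have := hR z hz; linarith
        _ ≤ 1 := by
            have h1 := mul_lt_mul_of_pos_right hy (show (0:ℝ) < R + ‖w‖ + 1 by positivity)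
            rw [inv_mul_cancel₀ (show (R + ‖w‖ + 1) ≠ 0 by positivity)] at h1
            nlinarith [norm_nonneg y]
    intro h0
    have := measure_mono_null hsub h0
    exact (ne_of_gt (Metric.measure_ball_pos volume (0 : EuclideanSpace ℝ (Fin d)) hδ)) this
  · exact ne_of_lt ((polar_compact hKc hne hR hρ hball).isBounded.measure_lt_top)

lemma polar_vol_eq {w : EuclideanSpace ℝ (Fin d)} {ρ : ℝ} (hρ : 0 < ρ)
    (hball : Metric.closedBall w ρ ⊆ K) :
    ∫ y, Real.exp (⟪y, w⟫ - suppFn K y) =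
      (d.factorial : ℝ) * (volume (polarAt K w)).toReal := by
  have h := (polar_moment hKc hne hR hρ hball (fun _ => 1) 0 continuous_const
    (fun t y ht => by simp)).2
  simp only [one_mul] at h
  rw [h, Nat.add_zero]
  congr 1
  rw [setIntegral_const, smul_eq_mul, mul_one]
  rfl

lemma polar_integrable_exp {w : EuclideanSpace ℝ (Fin d)} {ρ : ℝ} (hρ : 0 < ρ)
    (hball : Metric.closedBall w ρ ⊆ K) :
    Integrable (fun y => Real.exp (⟪y, w⟫ - suppFn K y)) := by
  have h := (polar_moment hKc hne hR hρ hball (fun _ => 1) 0 continuous_const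
    (fun t y ht => by simp)).1
  apply h.congr
  filter_upwards with y
  rw [one_mul]

end PolarMoment

set_option maxHeartbeats 2000000 in
set_option synthInstance.maxHeartbeats 200000 in
/-- Gradient and Hessian of the universal barrier: if `μ` and `Sig` are the centroid and
covariance matrix of the polar body `(K − x)°`, then `∇ψ_K(x) = (d+1)μ` and
`∇²ψ_K(x) = (d+1)(d+2)Σ + (d+1)μμᵀ`. -/
theorem uniBarrier_grad_hessian {d : ℕ} (K : Set (EuclideanSpace ℝ (Fin d)))
    (hKc : IsCompact K) (hKconv : Convex ℝ K) (hKint : (interior K).Nonempty)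
    (x : EuclideanSpace ℝ (Fin d)) (hx : x ∈ interior K)
    (μ : EuclideanSpace ℝ (Fin d)) (Sig : Matrix (Fin d) (Fin d) ℝ)
    (hμ : (∫ y in polarAt K x, y) = (volume (polarAt K x)).toReal • μ)
    (hcov : ∀ i j, (∫ y in polarAt K x, (y i - μ i) * (y j - μ j)) =
      (volume (polarAt K x)).toReal * Sig i j) :
    HasGradientAt (uniBarrier K) (((d : ℝ) + 1) • μ) x ∧
    ∀ u v : EuclideanSpace ℝ (Fin d),
      iteratedFDeriv ℝ 2 (uniBarrier K) x ![u, v] =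
        ((d : ℝ) + 1) * ((d : ℝ) + 2) * (∑ i, ∑ j, u i * Sig i j * v j) +
          ((d : ℝ) + 1) * (inner ℝ μ u : ℝ) * (inner ℝ μ v : ℝ) := by
  classical
  have hne : K.Nonempty := ⟨x, interior_subset hx⟩
  obtain ⟨R, hR⟩ : ∃ R : ℝ, ∀ z ∈ K, ‖z‖ ≤ R := by
    obtain ⟨r, hr⟩ := hKc.isBounded.subset_closedBall 0
    exact ⟨r, fun z hz => by simpa [mem_closedBall_zero_iff] using hr hz⟩
  obtain ⟨ε, hε, hball⟩ : ∃ ε : ℝ, 0 < ε ∧ Metric.closedBall x ε ⊆ K := by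
    obtain ⟨δ, hδ, h⟩ := Metric.isOpen_iff.mp isOpen_interior x hx
    refine ⟨δ/2, by positivity, fun z hz => interior_subset (h ?_)⟩
    rw [Metric.mem_closedBall] at hz; rw [Metric.mem_ball]; linarith
  have hε2 : 0 < ε/2 := by positivity
  have hball2 : ∀ w ∈ Metric.closedBall x (ε/2), Metric.closedBall w (ε/2) ⊆ K := by
    intro w hw z hz
    apply hball
    rw [Metric.mem_closedBall] at *
    calc dist z x ≤ dist z w + dist w x := dist_triangle _ _ _
      _ ≤ ε := by linarith
  have hxcb : x ∈ Metric.closedBall x (ε/2) := Metric.mem_closedBall_self hε2.le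
  set φ : EuclideanSpace ℝ (Fin d) → EuclideanSpace ℝ (Fin d) → ℝ :=
    fun w y => Real.exp (⟪y, w⟫ - suppFn K y) with hφ
  set F : EuclideanSpace ℝ (Fin d) → ℝ := fun w => ∫ y, φ w y with hFdef
  set L : EuclideanSpace ℝ (Fin d) → (EuclideanSpace ℝ (Fin d) →L[ℝ] ℝ) :=
    fun w => ∫ y, φ w y • innerSL ℝ y with hLdef
  set M : EuclideanSpace ℝ (Fin d) →L[ℝ] EuclideanSpace ℝ (Fin d) →L[ℝ] ℝ :=
    ∫ y, (φ x y • innerSL ℝ y).smulRight (innerSL ℝ y) with hMdef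
  have hscont : Continuous (suppFn K) := suppFn_continuous hKc hne hR
  have hφcont : ∀ w, Continuous (fun y => φ w y) := fun w =>
    Real.continuous_exp.comp ((continuous_id.inner continuous_const).sub hscont)
  have hφpos : ∀ w y, 0 < φ w y := fun w y => Real.exp_pos _
  have hinnerSLcont : Continuous fun y : EuclideanSpace ℝ (Fin d) => innerSL ℝ y :=
    (innerSL ℝ).continuous
  have hexp_bound : ∀ w ∈ Metric.closedBall x (ε/2), ∀ y,
      φ w y ≤ Real.exp (-(ε/2 * ‖y‖)) := by
    intro w hw y
    apply Real.exp_le_exp.mpr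
    have := suppFn_lower hKc hne hε2 (hball2 w hw) y
    linarith
  have hDom : ∀ j : ℕ, Integrable
      (fun y : EuclideanSpace ℝ (Fin d) => ‖y‖ ^ j * Real.exp (-(ε/2 * ‖y‖))) := by
    intro j
    refine (moment_integral (fun y : EuclideanSpace ℝ (Fin d) => ε/2 * ‖y‖)
      (fun y => ‖y‖ ^ j) j (ε/2) hε2 (by continuity)
      (fun t y ht => by
        show ε/2 * ‖t • y‖ = t * (ε/2 * ‖y‖)
        rw [norm_smul, Real.norm_eq_abs, abs_of_pos ht]; ring)
      (fun y => le_refl _) ?_ (by continuity)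
      (fun t y ht => by
        show ‖t • y‖ ^ j = t ^ j * ‖y‖ ^ j
        rw [norm_smul, Real.norm_eq_abs, abs_of_pos ht, mul_pow])).1
    have hseteq : {y : EuclideanSpace ℝ (Fin d) | ε/2 * ‖y‖ ≤ 1}
        = Metric.closedBall 0 (ε/2)⁻¹ := by
      ext y
      rw [Set.mem_setOf_eq, Metric.mem_closedBall, dist_zero_right]
      constructor
      · intro h
        rw [← mul_le_mul_iff_right₀ hε2, mul_inv_cancel₀ (ne_of_gt hε2)]
        linarith [mul_comm (ε/2) ‖y‖]
      · intro h
        have := mul_le_mul_of_nonneg_left h hε2.le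
        rw [mul_inv_cancel₀ (ne_of_gt hε2)] at this
        linarith
    rw [hseteq]
    exact convex_closedBall _ _
  -- pointwise derivative of the integrand
  have hphi_diff : ∀ (y w' : EuclideanSpace ℝ (Fin d)),
      HasFDerivAt (fun w => φ w y) (φ w' y • innerSL ℝ y) w' := by
    intro y w'
    have hbase : HasFDerivAt (fun w : EuclideanSpace ℝ (Fin d) => ⟪y, w⟫ - suppFn K y)
        (innerSL ℝ y) w' := (innerSL ℝ y).hasFDerivAt.sub_const _
    have := (Real.hasDerivAt_exp (⟪y, w'⟫ - suppFn K y)).comp_hasFDerivAt w' hbase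
    exact this
  -- first derivative of F
  have hasF : ∀ w ∈ Metric.ball x (ε/2), HasFDerivAt F (L w) w := by
    intro w hw
    set δ : ℝ := ε/2 - dist w x with hδdef
    have hδ : 0 < δ := by rw [Metric.mem_ball] at hw; rw [hδdef]; linarith
    have hsubset : Metric.ball w δ ⊆ Metric.closedBall x (ε/2) := by
      intro z hz
      rw [Metric.mem_ball, hδdef] at hz
      rw [Metric.mem_closedBall]
      calc dist z x ≤ dist z w + dist w x := dist_triangle _ _ _
        _ ≤ ε/2 := by linarith
    have hwmem : w ∈ Metric.closedBall x (ε/2) := hsubset (Metric.mem_ball_self hδ)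
    exact hasFDerivAt_integral_of_dominated_of_fderiv_le
      (F := fun w y => φ w y) (F' := fun w y => φ w y • innerSL ℝ y) (x₀ := w)
      (bound := fun y => ‖y‖ * Real.exp (-(ε/2 * ‖y‖))) (Metric.ball_mem_nhds w hδ)
      (Eventually.of_forall fun w' => (hφcont w').aestronglyMeasurable)
      (polar_integrable_exp hKc hne hR hε2 (hball2 w hwmem))
      (((hφcont w).smul hinnerSLcont).aestronglyMeasurable)
      (Eventually.of_forall fun y => by
        intro w' hw'
        show ‖φ w' y • innerSL ℝ y‖ ≤ ‖y‖ * Real.exp (-(ε/2 * ‖y‖))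
        rw [norm_smul (r := φ w' y) (x := innerSL ℝ y), Real.norm_eq_abs,
          abs_of_pos (hφpos w' y), innerSL_apply_norm]
        have h1 := hexp_bound w' (hsubset hw') y
        have h0 : (0:ℝ) ≤ ‖y‖ := norm_nonneg y
        calc φ w' y * ‖y‖ ≤ Real.exp (-(ε/2 * ‖y‖)) * ‖y‖ :=
              mul_le_mul_of_nonneg_right h1 h0
          _ = ‖y‖ * Real.exp (-(ε/2 * ‖y‖)) := mul_comm _ _)
      (by simpa using hDom 1)
      (Eventually.of_forall fun y => fun w' _ => hphi_diff y w')
  -- integrability of the CLM-valued integrands at points of the closed ball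
  have hInt1 : ∀ w ∈ Metric.closedBall x (ε/2),
      Integrable (fun y => φ w y • innerSL ℝ y) := by
    intro w hw
    apply Integrable.mono' (by simpa using hDom 1)
      (((hφcont w).smul hinnerSLcont).aestronglyMeasurable)
    filter_upwards with y
    show ‖φ w y • innerSL ℝ y‖ ≤ ‖y‖ * Real.exp (-(ε/2 * ‖y‖))
    rw [norm_smul (r := φ w y) (x := innerSL ℝ y), Real.norm_eq_abs,
      abs_of_pos (hφpos w y), innerSL_apply_norm]
    have h1 := hexp_bound w hw y
    have h0 : (0:ℝ) ≤ ‖y‖ := norm_nonneg y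
    calc φ w y * ‖y‖ ≤ Real.exp (-(ε/2 * ‖y‖)) * ‖y‖ := mul_le_mul_of_nonneg_right h1 h0
      _ = ‖y‖ * Real.exp (-(ε/2 * ‖y‖)) := mul_comm _ _
  letI : NormedAddCommGroup (EuclideanSpace ℝ (Fin d) →L[ℝ] EuclideanSpace ℝ (Fin d) →L[ℝ] ℝ) :=
    inferInstance
  have hInt2 : Integrable (fun y => (φ x y • innerSL ℝ y).smulRight (innerSL ℝ y)) := by
    apply Integrable.mono' (hDom 2)
      ((isBoundedBilinearMap_smulRight (𝕜 := ℝ)).continuous.comp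
        (((hφcont x).smul hinnerSLcont).prodMk hinnerSLcont)).aestronglyMeasurable
    filter_upwards with y
    show ‖(φ x y • innerSL ℝ y).smulRight (innerSL ℝ y)‖ ≤ ‖y‖ ^ 2 * Real.exp (-(ε/2 * ‖y‖))
    rw [ContinuousLinearMap.norm_smulRight_apply,
      norm_smul (r := φ x y) (x := innerSL ℝ y), Real.norm_eq_abs,
      abs_of_pos (hφpos x y), innerSL_apply_norm]
    have h1 := hexp_bound x hxcb y
    have h0 : (0:ℝ) ≤ ‖y‖ := norm_nonneg y
    calc φ x y * ‖y‖ * ‖y‖ ≤ Real.exp (-(ε/2 * ‖y‖)) * ‖y‖ * ‖y‖ :=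
          mul_le_mul_of_nonneg_right (mul_le_mul_of_nonneg_right h1 h0) h0
      _ = ‖y‖ ^ 2 * Real.exp (-(ε/2 * ‖y‖)) := by ring
  -- second derivative: derivative of L at x
  have hasL : HasFDerivAt L M x := by
    refine hasFDerivAt_integral_of_dominated_of_fderiv_le
      (F := fun w y => φ w y • innerSL ℝ y)
      (F' := fun w y => (φ w y • innerSL ℝ y).smulRight (innerSL ℝ y)) (x₀ := x)
      (bound := fun y => ‖y‖ ^ 2 * Real.exp (-(ε/2 * ‖y‖))) (Metric.ball_mem_nhds x hε2)
      (Eventually.of_forall fun w' => ((hφcont w').smul hinnerSLcont).aestronglyMeasurable)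
      (hInt1 x hxcb) (hInt2.aestronglyMeasurable)
      (Eventually.of_forall fun y => ?_) (hDom 2)
      (Eventually.of_forall fun y => fun w' _ => (hphi_diff y w').smul_const (innerSL ℝ y))
    intro w' hw'
    show ‖(φ w' y • innerSL ℝ y).smulRight (innerSL ℝ y)‖ ≤ ‖y‖ ^ 2 * Real.exp (-(ε/2 * ‖y‖))
    rw [ContinuousLinearMap.norm_smulRight_apply,
      norm_smul (r := φ w' y) (x := innerSL ℝ y), Real.norm_eq_abs,
      abs_of_pos (hφpos w' y), innerSL_apply_norm]
    have h1 := hexp_bound w' (Metric.ball_subset_closedBall hw') y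
    have h0 : (0:ℝ) ≤ ‖y‖ := norm_nonneg y
    calc φ w' y * ‖y‖ * ‖y‖ ≤ Real.exp (-(ε/2 * ‖y‖)) * ‖y‖ * ‖y‖ :=
          mul_le_mul_of_nonneg_right (mul_le_mul_of_nonneg_right h1 h0) h0
      _ = ‖y‖ ^ 2 * Real.exp (-(ε/2 * ‖y‖)) := by ring
  -- positivity of F
  have hFeq : ∀ w ∈ Metric.closedBall x (ε/2),
      F w = (d.factorial : ℝ) * (volume (polarAt K w)).toReal := by
    intro w hw
    exact polar_vol_eq hKc hne hR hε2 (hball2 w hw)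
  have hFpos : ∀ w ∈ Metric.closedBall x (ε/2), 0 < F w := by
    intro w hw
    rw [hFeq w hw]
    have h1 := polar_vol_pos hKc hne hR hε2 (hball2 w hw)
    have h2 : (0:ℝ) < (d.factorial : ℝ) := by exact_mod_cast d.factorial_pos
    positivity
  -- derivative of the barrier
  have hasPsi : ∀ w ∈ Metric.ball x (ε/2), HasFDerivAt (uniBarrier K) ((F w)⁻¹ • L w) w := by
    intro w hw
    have hlog : HasFDerivAt (fun w' => Real.log (F w')) ((F w)⁻¹ • L w) w :=
      (Real.hasDerivAt_log
        (ne_of_gt (hFpos w (Metric.ball_subset_closedBall hw)))).comp_hasFDerivAt w (hasF w hw)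
    have heq : uniBarrier K =ᶠ[𝓝 w]
        fun w' => Real.log (F w') - Real.log (d.factorial : ℝ) := by
      filter_upwards [Metric.isOpen_ball.mem_nhds hw] with w' hw'
      have hw'c : w' ∈ Metric.closedBall x (ε/2) := Metric.ball_subset_closedBall hw'
      have hv := polar_vol_pos hKc hne hR hε2 (hball2 w' hw'c)
      have h2 : (0:ℝ) < (d.factorial : ℝ) := by exact_mod_cast d.factorial_pos
      rw [uniBarrier, hFeq w' hw'c, Real.log_mul (ne_of_gt h2) (ne_of_gt hv)]
      ring
    exact (hlog.sub_const _).congr_of_eventuallyEq heq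
  -- second derivative of the barrier
  set D : EuclideanSpace ℝ (Fin d) →L[ℝ] EuclideanSpace ℝ (Fin d) →L[ℝ] ℝ :=
    (F x)⁻¹ • M + ((-(F x ^ 2)⁻¹) • L x).smulRight (L x) with hDdef
  have hasFx : HasFDerivAt F (L x) x := hasF x (Metric.mem_ball_self hε2)
  have hFxpos : 0 < F x := hFpos x hxcb
  have hinv : HasFDerivAt (fun w => (F w)⁻¹) ((-(F x ^ 2)⁻¹) • L x) x :=
    (hasDerivAt_inv (ne_of_gt hFxpos)).comp_hasFDerivAt x hasFx
  have hasD : HasFDerivAt (fun w => (F w)⁻¹ • L w) D x := hinv.smul hasL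
  have hfd_ev : fderiv ℝ (uniBarrier K) =ᶠ[𝓝 x] fun w => (F w)⁻¹ • L w := by
    filter_upwards [Metric.isOpen_ball.mem_nhds (Metric.mem_ball_self hε2)] with w hw
    exact (hasPsi w hw).fderiv
  have hsnd : fderiv ℝ (fderiv ℝ (uniBarrier K)) x = D :=
    (hasD.congr_of_eventuallyEq hfd_ev).fderiv
  -- moment identities at x
  set V : ℝ := (volume (polarAt K x)).toReal with hVdef
  have hVpos : 0 < V := polar_vol_pos hKc hne hR hε2 (hball2 x hxcb)
  have hPcomp : IsCompact (polarAt K x) := polar_compact hKc hne hR hε2 (hball2 x hxcb)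
  have hIntP : ∀ f : EuclideanSpace ℝ (Fin d) → ℝ, Continuous f →
      IntegrableOn f (polarAt K x) := fun f hf =>
    hf.continuousOn.integrableOn_compact hPcomp
  have hFx : F x = (d.factorial : ℝ) * V := hFeq x hxcb
  have hinner_expand : ∀ a b : EuclideanSpace ℝ (Fin d), ⟪a, b⟫ = ∑ i, a i * b i := by
    intro a b
    simp [PiLp.inner_apply, RCLike.inner_apply]
    exact Finset.sum_congr rfl fun i _ => mul_comm _ _
  have hcoord_cont : ∀ i : Fin d, Continuous fun y : EuclideanSpace ℝ (Fin d) => y i :=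
    fun i => (EuclideanSpace.proj (𝕜 := ℝ) i).continuous
  have hIntId : Integrable (fun y : EuclideanSpace ℝ (Fin d) => y)
      (volume.restrict (polarAt K x)) :=
    continuous_id.continuousOn.integrableOn_compact hPcomp
  have hmom1 : ∀ i, ∫ y in polarAt K x, y i = V * μ i := by
    intro i
    have hproj := ContinuousLinearMap.integral_comp_comm (EuclideanSpace.proj (𝕜 := ℝ) i) hIntId
    have h1 : ∫ y in polarAt K x, y i = (∫ y in polarAt K x, y) i := by
      simpa using hproj
    rw [h1, hμ]
    simp [PiLp.smul_apply, smul_eq_mul]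
  have hsint : ∀ u : EuclideanSpace ℝ (Fin d),
      ∫ y in polarAt K x, ⟪y, u⟫ = V * ⟪u, μ⟫ := by
    intro u
    have h1 : ∀ y : EuclideanSpace ℝ (Fin d), ⟪y, u⟫ = ∑ i, u i * y i := by
      intro y; rw [hinner_expand]; exact Finset.sum_congr rfl fun i _ => mul_comm _ _
    simp_rw [h1]
    rw [integral_finset_sum _ (fun i _ => (hIntP (fun y => u i * y i) (continuous_const.mul (hcoord_cont i))))]
    have h2 : ∀ i ∈ Finset.univ, (∫ y in polarAt K x, u i * y i) = u i * (V * μ i) := by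
      intro i _
      rw [integral_const_mul, hmom1 i]
    rw [Finset.sum_congr rfl h2, hinner_expand u μ, Finset.mul_sum]
    exact Finset.sum_congr rfl fun i _ => by ring
  -- first moment
  have hLx : ∀ u, L x u = ((d+1).factorial : ℝ) * (V * ⟪u, μ⟫) := by
    intro u
    have happ : L x u = ∫ y, (φ x y • innerSL ℝ y) u := by
      rw [hLdef]
      exact ContinuousLinearMap.integral_apply (hInt1 x hxcb) u
    rw [happ]
    have e1 : ∀ y : EuclideanSpace ℝ (Fin d),
        (φ x y • innerSL ℝ y) u = ⟪y, u⟫ * φ x y := by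
      intro y
      rw [ContinuousLinearMap.smul_apply, innerSL_apply_apply, smul_eq_mul]
      ring
    simp_rw [e1]
    have hmom := (polar_moment hKc hne hR hε2 (hball2 x hxcb)
      (fun y => ⟪y, u⟫) 1 (continuous_id.inner continuous_const)
      (fun t y ht => by
        show ⟪t • y, u⟫ = t ^ 1 * ⟪y, u⟫
        rw [real_inner_smul_left, pow_one])).2
    simp only [hφ]
    rw [hmom, hsint u]
  -- second moments
  have hmom2 : ∀ i j, ∫ y in polarAt K x, y i * y j = V * (Sig i j + μ i * μ j) := by
    intro i j
    have hc := hcov i j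
    have e : ∀ y : EuclideanSpace ℝ (Fin d), (y i - μ i) * (y j - μ j)
        = y i * y j - μ j * y i - μ i * y j + μ i * μ j := fun y => by ring
    have I1 : IntegrableOn (fun y : EuclideanSpace ℝ (Fin d) => y i * y j) (polarAt K x) :=
      hIntP _ ((hcoord_cont i).mul (hcoord_cont j))
    have I2 : IntegrableOn (fun y : EuclideanSpace ℝ (Fin d) => μ j * y i) (polarAt K x) :=
      hIntP _ (continuous_const.mul (hcoord_cont i))
    have I3 : IntegrableOn (fun y : EuclideanSpace ℝ (Fin d) => μ i * y j) (polarAt K x) :=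
      hIntP _ (continuous_const.mul (hcoord_cont j))
    have I4 : IntegrableOn (fun _ : EuclideanSpace ℝ (Fin d) => μ i * μ j) (polarAt K x) :=
      hIntP _ continuous_const
    have hsplit : ∫ y in polarAt K x, (y i - μ i) * (y j - μ j)
        = (∫ y in polarAt K x, y i * y j) - μ j * (V * μ i) - μ i * (V * μ j)
          + V * (μ i * μ j) := by
      simp_rw [e]
      have I12 : IntegrableOn (fun y : EuclideanSpace ℝ (Fin d) => y i * y j - μ j * y i)
          (polarAt K x) := I1.sub I2
      have I123 : IntegrableOn
          (fun y : EuclideanSpace ℝ (Fin d) => y i * y j - μ j * y i - μ i * y j)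
          (polarAt K x) := I12.sub I3
      rw [integral_add I123 I4, integral_sub I12 I3, integral_sub I1 I2,
        integral_const_mul, integral_const_mul, hmom1 i, hmom1 j, setIntegral_const, smul_eq_mul]
      rfl
    rw [hsplit] at hc
    linear_combination hc
  have hsint2 : ∀ u v : EuclideanSpace ℝ (Fin d),
      ∫ y in polarAt K x, ⟪y, u⟫ * ⟪y, v⟫
        = V * ((∑ i, ∑ j, u i * Sig i j * v j) + ⟪u, μ⟫ * ⟪v, μ⟫) := by
    intro u v
    have h1 : ∀ y : EuclideanSpace ℝ (Fin d), ⟪y, u⟫ * ⟪y, v⟫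
        = ∑ i, ∑ j, (u i * v j) * (y i * y j) := by
      intro y
      rw [hinner_expand y u, hinner_expand y v, Finset.sum_mul_sum]
      exact Finset.sum_congr rfl fun i _ => Finset.sum_congr rfl fun j _ => by ring
    simp_rw [h1]
    rw [integral_finset_sum _ (fun i _ => integrable_finset_sum _
      (fun j _ => (hIntP (fun y => (u i * v j) * (y i * y j)) (continuous_const.mul ((hcoord_cont i).mul (hcoord_cont j)))).mono_set
        (subset_refl _)))]
    have h2 : ∀ i ∈ Finset.univ, (∫ y in polarAt K x, ∑ j, (u i * v j) * (y i * y j))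
        = ∑ j, (u i * v j) * (V * (Sig i j + μ i * μ j)) := by
      intro i _
      rw [integral_finset_sum _
        (fun j _ => (hIntP (fun y => (u i * v j) * (y i * y j)) (continuous_const.mul ((hcoord_cont i).mul (hcoord_cont j)))))]
      exact Finset.sum_congr rfl fun j _ => by rw [integral_const_mul, hmom2 i j]
    rw [Finset.sum_congr rfl h2]
    calc ∑ i, ∑ j, (u i * v j) * (V * (Sig i j + μ i * μ j))
        = ∑ i, ∑ j, (V * (u i * Sig i j * v j) + V * ((u i * μ i) * (v j * μ j))) :=
          Finset.sum_congr rfl fun i _ => Finset.sum_congr rfl fun j _ => by ring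
      _ = (∑ i, ∑ j, V * (u i * Sig i j * v j))
          + ∑ i, ∑ j, V * ((u i * μ i) * (v j * μ j)) := by
          rw [← Finset.sum_add_distrib]
          exact Finset.sum_congr rfl fun i _ => Finset.sum_add_distrib
      _ = V * (∑ i, ∑ j, u i * Sig i j * v j) + V * (⟪u, μ⟫ * ⟪v, μ⟫) := by
          congr 1
          · rw [Finset.mul_sum]
            exact Finset.sum_congr rfl fun i _ => (Finset.mul_sum _ _ _).symm
          · rw [hinner_expand u μ, hinner_expand v μ, Finset.sum_mul_sum, Finset.mul_sum]
            exact Finset.sum_congr rfl fun i _ => by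
              rw [Finset.mul_sum]
              try exact Finset.sum_congr rfl fun j _ => by ring
      _ = V * ((∑ i, ∑ j, u i * Sig i j * v j) + ⟪u, μ⟫ * ⟪v, μ⟫) := by ring
  -- evaluation of M
  have hMx : ∀ u v, M u v = ((d+2).factorial : ℝ)
      * (V * ((∑ i, ∑ j, u i * Sig i j * v j) + ⟪u, μ⟫ * ⟪v, μ⟫)) := by
    intro u v
    have e1 : ∀ y : EuclideanSpace ℝ (Fin d),
        ((φ x y • innerSL ℝ y).smulRight (innerSL ℝ y)) u
          = (φ x y * ⟪y, u⟫) • innerSL ℝ y := by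
      intro y
      rw [ContinuousLinearMap.smulRight_apply, ContinuousLinearMap.smul_apply, innerSL_apply_apply,
        smul_eq_mul]
    have hint3 : Integrable (fun y => (φ x y * ⟪y, u⟫) • innerSL ℝ y) := by
      apply Integrable.mono' ((hDom 2).const_mul ‖u‖)
        ((((hφcont x).mul (continuous_id.inner continuous_const)).smul
          hinnerSLcont).aestronglyMeasurable)
      filter_upwards with y
      show ‖(φ x y * ⟪y, u⟫) • innerSL ℝ y‖ ≤ ‖u‖ * (‖y‖ ^ 2 * Real.exp (-(ε/2 * ‖y‖)))
      rw [norm_smul (r := φ x y * ⟪y, u⟫) (x := innerSL ℝ y), Real.norm_eq_abs,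
        innerSL_apply_norm, abs_mul, abs_of_pos (hφpos x y)]
      have h1 := hexp_bound x hxcb y
      have h0 : (0:ℝ) ≤ ‖y‖ := norm_nonneg y
      have h2 : |⟪y, u⟫| ≤ ‖y‖ * ‖u‖ := abs_real_inner_le_norm _ _
      calc φ x y * |⟪y, u⟫| * ‖y‖ ≤ Real.exp (-(ε/2 * ‖y‖)) * (‖y‖ * ‖u‖) * ‖y‖ :=
            mul_le_mul_of_nonneg_right
              (mul_le_mul h1 h2 (abs_nonneg _) (Real.exp_pos _).le) h0
        _ = ‖u‖ * (‖y‖ ^ 2 * Real.exp (-(ε/2 * ‖y‖))) := by ring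
    have happ1 : M u = ∫ y, (φ x y * ⟪y, u⟫) • innerSL ℝ y := by
      rw [hMdef, ContinuousLinearMap.integral_apply hInt2 u]
      exact integral_congr_ae (Eventually.of_forall fun y => e1 y)
    have happ2 : M u v = ∫ y, ((φ x y * ⟪y, u⟫) • innerSL ℝ y) v := by
      rw [happ1]
      exact ContinuousLinearMap.integral_apply hint3 v
    rw [happ2]
    have e2 : ∀ y : EuclideanSpace ℝ (Fin d),
        ((φ x y * ⟪y, u⟫) • innerSL ℝ y) v = (⟪y, u⟫ * ⟪y, v⟫) * φ x y := by
      intro y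
      rw [ContinuousLinearMap.smul_apply, innerSL_apply_apply, smul_eq_mul]
      ring
    simp_rw [e2]
    have hmom := (polar_moment hKc hne hR hε2 (hball2 x hxcb)
      (fun y => ⟪y, u⟫ * ⟪y, v⟫) 2
      ((continuous_id.inner continuous_const).mul (continuous_id.inner continuous_const))
      (fun t y ht => by
        show ⟪t • y, u⟫ * ⟪t • y, v⟫ = t ^ 2 * (⟪y, u⟫ * ⟪y, v⟫)
        rw [real_inner_smul_left, real_inner_smul_left]; ring)).2
    simp only [hφ]
    rw [hmom, hsint2 u v]
  have hd0 : (d.factorial : ℝ) ≠ 0 := by exact_mod_cast d.factorial_ne_zero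
  have hV0 : V ≠ 0 := ne_of_gt hVpos
  have hfac1 : ((d+1).factorial : ℝ) = ((d:ℝ)+1) * d.factorial := by
    rw [Nat.factorial_succ]; push_cast; ring
  have hfac2 : ((d+2).factorial : ℝ) = ((d:ℝ)+2) * (((d:ℝ)+1) * d.factorial) := by
    show (((d+1)+1).factorial : ℝ) = _
    rw [Nat.factorial_succ, Nat.factorial_succ]; push_cast; ring
  constructor
  · rw [hasGradientAt_iff_hasFDerivAt]
    have hCLM : InnerProductSpace.toDual ℝ (EuclideanSpace ℝ (Fin d)) (((d : ℝ) + 1) • μ)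
        = (F x)⁻¹ • L x := by
      apply ContinuousLinearMap.ext
      intro u
      rw [InnerProductSpace.toDual_apply_apply, ContinuousLinearMap.smul_apply, smul_eq_mul,
        hLx u, hFx, real_inner_smul_left, real_inner_comm μ u, hfac1]
      field_simp
    rw [hCLM]
    exact hasPsi x (Metric.mem_ball_self hε2)
  · intro u v
    rw [iteratedFDeriv_two_apply, hsnd]
    simp only [Matrix.cons_val_zero, Matrix.cons_val_one, Matrix.head_cons]
    have happD : D u v = (F x)⁻¹ * (M u v) + (-(F x ^ 2)⁻¹ * (L x u)) * (L x v) := by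
      rw [hDdef]
      rw [ContinuousLinearMap.add_apply, ContinuousLinearMap.smul_apply,
        ContinuousLinearMap.smulRight_apply, ContinuousLinearMap.add_apply,
        ContinuousLinearMap.smul_apply, ContinuousLinearMap.smul_apply,
        ContinuousLinearMap.smul_apply]
      simp only [smul_eq_mul]
      try ring
    rw [happD, hMx u v, hLx u, hLx v, hFx, hfac1, hfac2,
      real_inner_comm u μ, real_inner_comm v μ]
    field_simp
    ring
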